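/- Let V₁ ⊆ ℂ be an open set, let φ, α : V₁ → ℝ be C² functions with Δφ ≤ 0 (φ superharmonic), Δα ≥ 0 (α subharmonic), and φ(z) > α(z) for all z ∈ V₁. For each integer n ≥ 2 define λ_n(z) = −log( (π/(n−1)) (e^{(2n−2)φ(z)} − e^{(2n−2)α(z)}) ). Then λ_n is C² and Δλ_n ≥ 0 on V₁, i.e., λ_n is subharmonic on V₁. -/

import Mathlib

/-!
With `k = 2n - 2`, `c = π / (n - 1)` and `u = kφ - kα > 0` one has
`λ_n = -kφ + ψ ∘ u` for `ψ(t) = -log (c (1 - e^{-t}))`. The first summand is subharmonic since `φ`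
is superharmonic. For the second, the chain rule `Δ(ψ ∘ u) = ψ''(u) ‖∇u‖² + ψ'(u) Δu` has both
terms nonnegative: `ψ' = -1/(e^t - 1) ≤ 0`, `ψ'' = e^t/(e^t - 1)² ≥ 0`, and `u` is superharmonic.
-/

/-- The Laplacian `Δf = ∂²f/∂x² + ∂²f/∂y²` of `f : ℂ → ℝ`, expressed via the second
(iterated Fréchet) derivative in the directions `1` and `i`. -/
noncomputable def lap (f : ℂ → ℝ) (z : ℂ) : ℝ :=
  iteratedFDeriv ℝ 2 f z ![1, 1] + iteratedFDeriv ℝ 2 f z ![Complex.I, Complex.I]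

open Filter Topology Laplacian InnerProductSpace Real

theorem lap_eq_laplacian (f : ℂ → ℝ) : lap f = Δ f :=
  (laplacian_eq_iteratedFDeriv_complexPlane f).symm

section ChainRule

variable {E : Type*} [NormedAddCommGroup E] [NormedSpace ℝ E] {f : E → ℝ} {g : ℝ → ℝ} {x : E}

theorem ContDiffAt.fderiv_fderiv_comp_apply (hg : ContDiffAt ℝ 2 g (f x))
    (hf : ContDiffAt ℝ 2 f x) (v w : E) :
    fderiv ℝ (fderiv ℝ (g ∘ f)) x v w =
      deriv (deriv g) (f x) * fderiv ℝ f x v * fderiv ℝ f x w +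
        deriv g (f x) * fderiv ℝ (fderiv ℝ f) x v w := by
  have hg_near : ∀ᶠ y in 𝓝 x, DifferentiableAt ℝ g (f y) :=
    hf.continuousAt.eventually ((hg.eventually (by simp)).mono fun _ h ↦
      h.differentiableAt (by norm_num))
  have hf_near : ∀ᶠ y in 𝓝 x, DifferentiableAt ℝ f y :=
    (hf.eventually (by simp)).mono fun _ h ↦ h.differentiableAt (by norm_num)
  have hfderiv : fderiv ℝ (g ∘ f) =ᶠ[𝓝 x] fun y ↦ deriv g (f y) • fderiv ℝ f y := by
    filter_upwards [hg_near, hf_near] with y hgy hfy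
    exact (hgy.hasDerivAt.comp_hasFDerivAt y hfy.hasFDerivAt).fderiv
  have hg' : HasFDerivAt (fun y ↦ deriv g (f y)) (deriv (deriv g) (f x) • fderiv ℝ f x) x :=
    ((hg.derivWithin (m := 1) (by norm_num)).differentiableAt (by norm_num)).hasDerivAt
      |>.comp_hasFDerivAt x (hf.differentiableAt (by norm_num)).hasFDerivAt
  have hf' : HasFDerivAt (fderiv ℝ f) (fderiv ℝ (fderiv ℝ f) x) x :=
    ((hf.fderiv_right (m := 1) (by norm_num)).differentiableAt (by norm_num)).hasFDerivAt
  have hprod : HasFDerivAt (fun y ↦ deriv g (f y) • fderiv ℝ f y)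
      (deriv g (f x) • fderiv ℝ (fderiv ℝ f) x +
        (deriv (deriv g) (f x) • fderiv ℝ f x).smulRight (fderiv ℝ f x)) x :=
    hg'.smul hf'
  rw [hfderiv.fderiv_eq, hprod.fderiv]
  simp only [add_apply, smul_apply, ContinuousLinearMap.smulRight_apply, smul_eq_mul]
  ring

end ChainRule

section Laplacian

variable {E : Type*} [NormedAddCommGroup E] [InnerProductSpace ℝ E] [FiniteDimensional ℝ E]
  {f : E → ℝ} {g : ℝ → ℝ} {x : E}

theorem ContDiffAt.laplacian_comp (hg : ContDiffAt ℝ 2 g (f x)) (hf : ContDiffAt ℝ 2 f x) :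
    Δ (g ∘ f) x = deriv (deriv g) (f x) * ‖fderiv ℝ f x‖ ^ 2 + deriv g (f x) * Δ f x := by
  simp only [laplacian_eq_iteratedFDeriv_stdOrthonormalBasis, iteratedFDeriv_two_apply,
    Matrix.cons_val_zero, Matrix.cons_val_one, (stdOrthonormalBasis ℝ E).norm_dual,
    Finset.mul_sum, ← Finset.sum_add_distrib, hg.fderiv_fderiv_comp_apply hf]
  congr! 1 with i
  ring

theorem ContDiffAt.laplacian_comp_nonneg (hg : ContDiffAt ℝ 2 g (f x)) (hf : ContDiffAt ℝ 2 f x)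
    (hg' : deriv g (f x) ≤ 0) (hg'' : 0 ≤ deriv (deriv g) (f x)) (hΔf : Δ f x ≤ 0) :
    0 ≤ Δ (g ∘ f) x := by
  rw [hg.laplacian_comp hf]
  exact add_nonneg (by positivity) (mul_nonneg_of_nonpos_of_nonpos hg' hΔf)

end Laplacian

section NegLogOneSubExpNeg

variable {c t : ℝ}

theorem exp_sub_one_ne_zero (ht : t ≠ 0) : exp t - 1 ≠ 0 :=
  sub_ne_zero.2 fun h ↦ ht (exp_eq_one_iff t |>.1 h)

theorem one_sub_exp_neg_ne_zero (ht : t ≠ 0) : 1 - exp (-t) ≠ 0 :=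
  neg_sub (exp (-t)) 1 ▸ neg_ne_zero.2 (exp_sub_one_ne_zero (neg_ne_zero.2 ht))

theorem hasDerivAt_neg_log_mul_one_sub_exp_neg (hc : c ≠ 0) (ht : t ≠ 0) :
    HasDerivAt (fun s ↦ -log (c * (1 - exp (-s)))) (-(exp t - 1)⁻¹) t := by
  have hne := one_sub_exp_neg_ne_zero ht
  have h : HasDerivAt (fun s ↦ -log (c * (1 - exp (-s))))
      (-(c * -(exp (-t) * -1) / (c * (1 - exp (-t))))) t :=
    ((((hasDerivAt_neg t).exp.const_sub 1).const_mul c).log (mul_ne_zero hc hne)).neg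
  refine h.congr_deriv ?_
  have := exp_sub_one_ne_zero ht
  rw [exp_neg] at hne ⊢
  field_simp

theorem deriv_deriv_neg_log_mul_one_sub_exp_neg (hc : c ≠ 0) (ht : t ≠ 0) :
    deriv (deriv fun s ↦ -log (c * (1 - exp (-s)))) t = exp t / (exp t - 1) ^ 2 := by
  have hderiv :
      deriv (fun s ↦ -log (c * (1 - exp (-s)))) =ᶠ[𝓝 t] fun s ↦ -(exp s - 1)⁻¹ := by
    filter_upwards [isOpen_ne.mem_nhds ht] with s hs
    exact (hasDerivAt_neg_log_mul_one_sub_exp_neg hc hs).deriv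
  have h : HasDerivAt (fun s ↦ -(exp s - 1)⁻¹) (-(-exp t / (exp t - 1) ^ 2)) t :=
    (((hasDerivAt_exp t).sub_const 1).inv (exp_sub_one_ne_zero ht)).neg
  rw [hderiv.deriv_eq, h.deriv, neg_div, neg_neg]

theorem contDiffAt_neg_log_mul_one_sub_exp_neg (hc : c ≠ 0) (ht : t ≠ 0) {n : WithTop ℕ∞} :
    ContDiffAt ℝ n (fun s ↦ -log (c * (1 - exp (-s)))) t :=
  ((contDiffAt_const.mul (contDiffAt_const.sub (contDiff_exp.contDiffAt.comp t
    contDiffAt_id.neg))).log (mul_ne_zero hc (one_sub_exp_neg_ne_zero ht))).neg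

theorem log_mul_exp_sub_exp {s : ℝ} (hc : c ≠ 0) (hst : s ≠ t) :
    log (c * (exp s - exp t)) = s + log (c * (1 - exp (-(s - t)))) := by
  have hsplit : c * (exp s - exp t) = exp s * (c * (1 - exp (-(s - t)))) := by
    have : exp s * exp (-(s - t)) = exp t := by rw [← exp_add]; ring_nf
    linear_combination c * this
  rw [hsplit, log_mul (exp_ne_zero s)
    (mul_ne_zero hc (one_sub_exp_neg_ne_zero (sub_ne_zero.2 hst))), log_exp]

end NegLogOneSubExpNeg

section Subharmonic

variable {E : Type*} [NormedAddCommGroup E] [InnerProductSpace ℝ E] [FiniteDimensional ℝ E]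
  {φ α : E → ℝ} {x : E} {c k : ℝ}

theorem laplacian_neg_log_mul_exp_sub_exp_nonneg (hc : c ≠ 0) (hk : 0 < k)
    (hφ : ContDiffAt ℝ 2 φ x) (hα : ContDiffAt ℝ 2 α x)
    (hΔφ : Δ φ x ≤ 0) (hΔα : 0 ≤ Δ α x) (hαφ : α x < φ x) :
    0 ≤ Δ (fun y ↦ -log (c * (exp (k * φ y) - exp (k * α y)))) x := by
  set ψ : ℝ → ℝ := fun s ↦ -log (c * (1 - exp (-s)))
  set u : E → ℝ := k • φ - k • α
  have hφ_smul (a : ℝ) : ContDiffAt ℝ 2 (a • φ) x := hφ.const_smul a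
  have hα_smul : ContDiffAt ℝ 2 (k • α) x := hα.const_smul k
  have hu : ContDiffAt ℝ 2 u x := (hφ_smul k).sub hα_smul
  have hux : 0 < u x := by
    simp only [u, Pi.sub_apply, Pi.smul_apply, smul_eq_mul]
    nlinarith
  have hψ : ContDiffAt ℝ 2 ψ (u x) := contDiffAt_neg_log_mul_one_sub_exp_neg hc hux.ne'
  have hsplit : (fun y ↦ -log (c * (exp (k * φ y) - exp (k * α y)))) =ᶠ[𝓝 x]
      (-k) • φ + ψ ∘ u := by
    filter_upwards [hα.continuousAt.eventually_lt hφ.continuousAt hαφ] with y hy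
    rw [log_mul_exp_sub_exp hc (by nlinarith)]
    simp only [ψ, u, Pi.add_apply, Pi.sub_apply, Pi.smul_apply, Function.comp_apply, smul_eq_mul]
    ring
  have hΔu : Δ u x ≤ 0 := by
    rw [(hφ_smul k).laplacian_sub hα_smul, laplacian_smul _ hφ, laplacian_smul _ hα, smul_eq_mul,
      smul_eq_mul]
    nlinarith
  have hψu : 0 ≤ Δ (ψ ∘ u) x := by
    refine hψ.laplacian_comp_nonneg hu ?_ ?_ hΔu
    · rw [(hasDerivAt_neg_log_mul_one_sub_exp_neg hc hux.ne').deriv, neg_nonpos, inv_nonneg,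
        sub_nonneg]
      exact one_le_exp hux.le
    · rw [deriv_deriv_neg_log_mul_one_sub_exp_neg hc hux.ne']
      positivity
  rw [(laplacian_congr_nhds hsplit).eq_of_nhds, (hφ_smul _).laplacian_add (hψ.comp x hu),
    laplacian_smul _ hφ, smul_eq_mul]
  nlinarith

end Subharmonic

/-- If `φ` is C² superharmonic, `α` is C² subharmonic on an open set
`V₁` with `φ > α`, then for every integer `n ≥ 2` the function
`λ_n(z) = -log((π/(n-1)) (e^{(2n-2)φ(z)} - e^{(2n-2)α(z)}))` is C² and subharmonic on `V₁`. -/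
theorem lambda_n_subharmonic (V₁ : Set ℂ) (hV₁ : IsOpen V₁) (φ α : ℂ → ℝ)
    (hφ : ContDiffOn ℝ 2 φ V₁) (hα : ContDiffOn ℝ 2 α V₁)
    (hφ_super : ∀ z ∈ V₁, lap φ z ≤ 0) (hα_sub : ∀ z ∈ V₁, 0 ≤ lap α z)
    (hαφ : ∀ z ∈ V₁, α z < φ z) (n : ℤ) (hn : 2 ≤ n) :
    ContDiffOn ℝ 2
      (fun z => -Real.log (Real.pi / ((n : ℝ) - 1) *
        (Real.exp ((2 * (n : ℝ) - 2) * φ z) - Real.exp ((2 * (n : ℝ) - 2) * α z)))) V₁ ∧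
    ∀ z ∈ V₁,
      0 ≤ lap (fun z => -Real.log (Real.pi / ((n : ℝ) - 1) *
        (Real.exp ((2 * (n : ℝ) - 2) * φ z) - Real.exp ((2 * (n : ℝ) - 2) * α z)))) z := by
  have hn' : (2 : ℝ) ≤ n := by exact_mod_cast hn
  have hc : π / ((n : ℝ) - 1) ≠ 0 := (div_pos pi_pos (by linarith)).ne'
  have hk : 0 < 2 * (n : ℝ) - 2 := by linarith
  refine ⟨?_, fun z hz ↦ ?_⟩
  · refine (ContDiffOn.log ?_ fun z hz ↦ mul_ne_zero hc ?_).neg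
    · exact contDiffOn_const.mul
        ((contDiffOn_const.mul hφ).exp.sub (contDiffOn_const.mul hα).exp)
    · exact sub_ne_zero.2 (exp_lt_exp.2 (by nlinarith [hαφ z hz])).ne'
  · have hz_nhds := hV₁.mem_nhds hz
    simp only [lap_eq_laplacian] at hφ_super hα_sub ⊢
    exact laplacian_neg_log_mul_exp_sub_exp_nonneg hc hk (hφ.contDiffAt hz_nhds)
      (hα.contDiffAt hz_nhds) (hφ_super z hz) (hα_sub z hz) (hαφ z hz)
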